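/- Let X be a closed subset of a metric space M, Y a closed subset of a metric space N, and f : M∖X → N∖Y a continuous map. Then the following are equivalent: (1) for every open set U ⊆ N with Y ⊆ U there exists an open set V ⊆ M with X ⊆ V such that f(V∖X) ⊆ U∖Y; (2) for every compact K ⊆ M there exists a compact L ⊆ N with f(K∖X) ⊆ L∖Y, and moreover for every compact K ⊆ M the restriction of f to K∖X is a proper map into N∖Y (i.e., for every compact Q ⊆ N∖Y the set {x ∈ K∖X : f(x) ∈ Q} is compact). -/

import Mathlib

/-!
For `(1) → (2)`: applying `(1)` to `U = Qᶜ` gives an open `V ⊇ X` on which nothing is mapped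
into `Q`, so `{x ∈ K ∖ X | f x ∈ Q}` is a closed subset of the compact set `K ∖ V`. For the
compact `L` one takes the closure of `f (K ∖ X)`; its compactness is checked on sequences
`f (x n)` with `x n → p ∈ K`. If `p ∉ X` continuity of `f` gives the limit. If `p ∈ X` and
`f (x n)` had no convergent subsequence, its range would be closed and disjoint from `Y`, and `(1)`
applied to the complement of that range contradicts `x n → p`.

For `(2) → (1)`: take for `V` the interior of the set of points that are in `X` or mapped into `U`.
If some `p ∈ X` were not interior, there would be `x n → p` with `f (x n) ∉ U`. All `x n` lie in
the compact set given by `(2)` for `K = {p} ∪ {x n}` and `Q = L ∖ U`; its image in `M` is closed,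
so it contains `p`, which is impossible since it misses `X`.
-/

open Filter Topology Set

theorem isCompact_closure_of_forall_exists_tendsto_subseq {α : Type*} [PseudoMetricSpace α]
    {s : Set α}
    (h : ∀ u : ℕ → α, (∀ n, u n ∈ s) →
      ∃ a, ∃ φ : ℕ → ℕ, StrictMono φ ∧ Tendsto (u ∘ φ) atTop (𝓝 a)) :
    IsCompact (closure s) := by
  refine IsSeqCompact.isCompact fun w hw => ?_
  choose z hzs hwz using fun n : ℕ =>
    Metric.mem_closure_iff.mp (hw n) (1 / (n + 1)) Nat.one_div_pos_of_nat
  obtain ⟨a, φ, hφ, hza⟩ := h z hzs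
  refine ⟨a, mem_closure_of_tendsto hza (.of_forall fun n => hzs (φ n)), φ, hφ,
    hza.congr_dist ?_⟩
  refine squeeze_zero (fun _ => dist_nonneg) (fun n => ?_)
    (tendsto_one_div_add_atTop_nhds_zero_nat.comp hφ.tendsto_atTop)
  rw [dist_comm]
  exact (hwz (φ n)).le

section

variable {M N : Type*} [TopologicalSpace M] [TopologicalSpace N] {X : Set M} {Y : Set N}
  {f : ↥Xᶜ → ↥Yᶜ}

def MapsNbhdsToNbhds (X : Set M) (Y : Set N) (f : ↥Xᶜ → ↥Yᶜ) : Prop :=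
  ∀ U : Set N, IsOpen U → Y ⊆ U →
    ∃ V : Set M, IsOpen V ∧ X ⊆ V ∧ ∀ x : ↥Xᶜ, (x : M) ∈ V → (f x : N) ∈ U \ Y

theorem MapsNbhdsToNbhds.isCompact_setOf_mem_and_mem [T2Space N] (hf : Continuous f)
    (h : MapsNbhdsToNbhds X Y f) {K : Set M} (hK : IsCompact K) {Q : Set N} (hQY : Q ⊆ Yᶜ)
    (hQ : IsCompact Q) :
    IsCompact {x : ↥Xᶜ | (x : M) ∈ K ∧ (f x : N) ∈ Q} := by
  obtain ⟨V, hV, hXV, hfV⟩ := h Qᶜ hQ.isClosed.isOpen_compl (subset_compl_comm.mp hQY)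
  have hKV : IsCompact ((↑) ⁻¹' (K \ V) : Set ↥Xᶜ) :=
    IsInducing.subtypeVal.isCompact_preimage' (hK.diff hV) <| by
      rw [Subtype.range_coe]
      exact fun m hm hmX => hm.2 (hXV hmX)
  convert hKV.inter_right (hQ.isClosed.preimage hf.subtype_val) using 1
  ext x
  exact ⟨fun ⟨hxK, hxQ⟩ => ⟨⟨hxK, fun hxV => (hfV x hxV).1 hxQ⟩, hxQ⟩,
    fun ⟨⟨hxK, _⟩, hxQ⟩ => ⟨hxK, hxQ⟩⟩

theorem MapsNbhdsToNbhds.exists_tendsto_subseq [SequentialSpace N] [T1Space N]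
    (h : MapsNbhdsToNbhds X Y f) {x : ℕ → ↥Xᶜ} {p : M} (hp : p ∈ X)
    (hx : Tendsto (fun n => (x n : M)) atTop (𝓝 p)) :
    ∃ a, ∃ ψ : ℕ → ℕ, StrictMono ψ ∧ Tendsto (fun n => (f (x (ψ n)) : N)) atTop (𝓝 a) := by
  by_contra! hno
  obtain ⟨V, hV, hXV, hfV⟩ := h (range fun n => (f (x n) : N))ᶜ
    (isClosed_range_of_not_tendsto hno).isOpen_compl
    (by rintro y hy ⟨n, rfl⟩; exact (f (x n)).2 hy)
  obtain ⟨n, hn⟩ := (hx.eventually_mem (hV.mem_nhds (hXV hp))).exists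
  exact (hfV (x n) hn).1 (mem_range_self n)

theorem mapsNbhdsToNbhds_of_forall_isCompact [FrechetUrysohnSpace M] [T2Space M]
    (hL : ∀ K : Set M, IsCompact K →
      ∃ L : Set N, IsCompact L ∧ ∀ x : ↥Xᶜ, (x : M) ∈ K → (f x : N) ∈ L \ Y)
    (hproper : ∀ K : Set M, IsCompact K → ∀ Q : Set N, Q ⊆ Yᶜ → IsCompact Q →
      IsCompact {x : ↥Xᶜ | (x : M) ∈ K ∧ (f x : N) ∈ Q}) :
    MapsNbhdsToNbhds X Y f := by
  intro U hU hYU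
  set W : Set M := {m | ∀ hm : m ∈ Xᶜ, (f ⟨m, hm⟩ : N) ∈ U}
  refine ⟨interior W, isOpen_interior, fun p hpX => ?_,
    fun x hx => ⟨interior_subset hx x.2, (f x).2⟩⟩
  by_contra hpW
  have hp_closure : p ∈ closure Wᶜ := by rwa [closure_compl, mem_compl_iff]
  obtain ⟨x, hxW, hxp⟩ := mem_closure_iff_seq_limit.mp hp_closure
  simp only [W, mem_compl_iff, mem_ofPred_eq, not_forall] at hxW
  choose hxX hxU using hxW
  set K := insert p (range x)
  have hK : IsCompact K := hxp.isCompact_insert_range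
  have hxK : ∀ n, x n ∈ K := fun n => subset_insert _ _ (mem_range_self n)
  obtain ⟨L, hL, hfL⟩ := hL K hK
  have hS := hproper K hK (L \ U) (fun q hq hqY => hq.2 (hYU hqY)) (hL.diff hU)
  have hxS : ∀ n, x n ∈ (↑) '' {y : ↥Xᶜ | (y : M) ∈ K ∧ (f y : N) ∈ L \ U} :=
    fun n => ⟨⟨x n, hxX n⟩, ⟨hxK n, (hfL _ (hxK n)).1, hxU n⟩, rfl⟩
  obtain ⟨y, -, rfl⟩ := (hS.image continuous_subtype_val).isClosed.mem_of_tendsto hxp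
    (.of_forall hxS)
  exact y.2 hpX

end

theorem MapsNbhdsToNbhds.isCompact_closure_image {M N : Type*} [TopologicalSpace M]
    [FirstCountableTopology M] [MetricSpace N] {X : Set M} {Y : Set N} {f : ↥Xᶜ → ↥Yᶜ}
    (hf : Continuous f) (h : MapsNbhdsToNbhds X Y f) {K : Set M} (hK : IsCompact K) :
    IsCompact (closure ((fun x => (f x : N)) '' {x : ↥Xᶜ | (x : M) ∈ K})) := by
  refine isCompact_closure_of_forall_exists_tendsto_subseq fun u hu => ?_
  choose x hxK hxu using hu
  obtain rfl : u = fun n => (f (x n) : N) := funext fun n => (hxu n).symm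
  obtain ⟨p, -, φ, hφ, hxp⟩ := hK.tendsto_subseq hxK
  by_cases hp : p ∈ X
  · obtain ⟨a, ψ, hψ, ha⟩ := h.exists_tendsto_subseq (x := x ∘ φ) hp hxp
    exact ⟨a, φ ∘ ψ, hφ.comp hψ, ha⟩
  · exact ⟨f ⟨p, hp⟩, φ, hφ,
      (hf.subtype_val.tendsto ⟨p, hp⟩).comp (tendsto_subtype_rng.mpr hxp)⟩

theorem stmt2_general {M N : Type*} [MetricSpace M] [MetricSpace N] (X : Set M) (Y : Set N)
    (f : (Xᶜ : Set M) → (Yᶜ : Set N)) (hf : Continuous f) :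
    (∀ U : Set N, IsOpen U → Y ⊆ U →
        ∃ V : Set M, IsOpen V ∧ X ⊆ V ∧
          ∀ x : (Xᶜ : Set M), (x : M) ∈ V → (f x : N) ∈ U \ Y)
      ↔
    ((∀ K : Set M, IsCompact K →
        ∃ L : Set N, IsCompact L ∧
          ∀ x : (Xᶜ : Set M), (x : M) ∈ K → (f x : N) ∈ L \ Y) ∧
      (∀ K : Set M, IsCompact K → ∀ Q : Set N, Q ⊆ Yᶜ → IsCompact Q →
        IsCompact {x : (Xᶜ : Set M) | (x : M) ∈ K ∧ (f x : N) ∈ Q})) := by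
  change MapsNbhdsToNbhds X Y f ↔ _
  refine ⟨fun h => ⟨fun K hK => ?_, fun K hK Q hQY hQ =>
    h.isCompact_setOf_mem_and_mem hf hK hQY hQ⟩,
    fun ⟨hL, hproper⟩ => mapsNbhdsToNbhds_of_forall_isCompact hL hproper⟩
  exact ⟨_, h.isCompact_closure_image hf hK,
    fun x hx => ⟨subset_closure ⟨x, hx, rfl⟩, (f x).2⟩⟩

theorem stmt2 {M N : Type*} [MetricSpace M] [MetricSpace N] (X : Set M) (Y : Set N)
    (hX : IsClosed X) (hY : IsClosed Y)
    (f : (Xᶜ : Set M) → (Yᶜ : Set N)) (hf : Continuous f) :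
    (∀ U : Set N, IsOpen U → Y ⊆ U →
        ∃ V : Set M, IsOpen V ∧ X ⊆ V ∧
          ∀ x : (Xᶜ : Set M), (x : M) ∈ V → (f x : N) ∈ U \ Y)
      ↔
    ((∀ K : Set M, IsCompact K →
        ∃ L : Set N, IsCompact L ∧
          ∀ x : (Xᶜ : Set M), (x : M) ∈ K → (f x : N) ∈ L \ Y) ∧
      (∀ K : Set M, IsCompact K → ∀ Q : Set N, Q ⊆ Yᶜ → IsCompact Q →
        IsCompact {x : (Xᶜ : Set M) | (x : M) ∈ K ∧ (f x : N) ∈ Q})) :=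
  stmt2_general X Y f hf
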